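/- The algebraic connectivity λ₂(L(w)) of a weighted graph Laplacian is a monotonically nondecreasing concave function of the edge-weight vector w on the nonnegative orthant: if 0 ≤ w ≤ w' entrywise then λ₂(L(w)) ≤ λ₂(L(w')), and λ₂(L(·)) is concave in w. -/

import Mathlib

/-!
For a fixed test vector `x`, the quadratic form `xᵀ L(w) x = Σ_l w_l (a_lᵀ x)²` is a linear
function of `w` with nonnegative coefficients, hence monotone and concave in `w`. The value
`λ₂(L(w))` is the infimum of these functions over the unit vectors orthogonal to `𝟙`, and on the
nonnegative orthant this infimum is bounded below by `0`; an infimum of monotone concave functions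
is monotone and concave.
-/

open Matrix Finset

/-- The second-smallest eigenvalue (algebraic connectivity / Fiedler value). -/
noncomputable def lambda2 {V : Type*} [Fintype V] (L : Matrix V V ℝ) : ℝ :=
  sInf {r : ℝ | ∃ x : V → ℝ, (∑ i, x i ^ 2) = 1 ∧ (∑ i, x i) = 0 ∧
    r = x ⬝ᵥ L.mulVec x}

/-- The weighted Laplacian `L(w) = Σ_l w_l a_l a_lᵀ` built from edge incidence
vectors `a_l` and edge weights `w`. -/
noncomputable def lapOfWeights {n E : ℕ} (a : Fin E → Fin n → ℝ) (w : Fin E → ℝ) :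
    Matrix (Fin n) (Fin n) ℝ :=
  ∑ l, w l • Matrix.vecMulVec (a l) (a l)

/-- `a` is the incidence vector of an edge: one entry `+1`, one entry `-1`, rest `0`. -/
def IsIncidenceVector {V : Type*} (a : V → ℝ) : Prop :=
  ∃ i j, i ≠ j ∧ a i = 1 ∧ a j = -1 ∧ ∀ k, k ≠ i → k ≠ j → a k = 0

theorem ConcaveOn.ciInf {ι E : Type*} [AddCommMonoid E] [Module ℝ E] {s : Set E}
    {f : ι → E → ℝ} (hs : Convex ℝ s) (hf : ∀ i, ConcaveOn ℝ s (f i))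
    (hbdd : ∀ x ∈ s, BddBelow (Set.range fun i => f i x)) :
    ConcaveOn ℝ s fun x => ⨅ i, f i x := by
  rcases isEmpty_or_nonempty ι with _ | _
  · simpa only [Real.iInf_of_isEmpty] using concaveOn_const 0 hs
  refine ⟨hs, fun x hx y hy a b ha hb hab => le_ciInf fun i => ?_⟩
  calc a • (⨅ i, f i x) + b • ⨅ i, f i y ≤ a • f i x + b • f i y := by
        gcongr
        exacts [ciInf_le (hbdd x hx) i, ciInf_le (hbdd y hy) i]
    _ ≤ f i (a • x + b • y) := (hf i).2 hx hy ha hb hab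

section DotProduct

variable {ι m : Type*} [Fintype m] (c : ι → m → ℝ)

theorem bddBelow_range_dotProduct (hc : ∀ i, 0 ≤ c i) {w : m → ℝ} (hw : 0 ≤ w) :
    BddBelow (Set.range fun i => w ⬝ᵥ c i) :=
  ⟨0, by rintro _ ⟨i, rfl⟩; exact dotProduct_nonneg_of_nonneg hw (hc i)⟩

theorem monotoneOn_iInf_dotProduct (hc : ∀ i, 0 ≤ c i) :
    MonotoneOn (fun w => ⨅ i, w ⬝ᵥ c i) (Set.Ici 0) := fun _ hw _ _ hww' =>
  ciInf_mono (bddBelow_range_dotProduct c hc hw)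
    fun i => dotProduct_le_dotProduct_of_nonneg_right hww' (hc i)

theorem concaveOn_iInf_dotProduct (hc : ∀ i, 0 ≤ c i) :
    ConcaveOn ℝ (Set.Ici 0) fun w => ⨅ i, w ⬝ᵥ c i :=
  ConcaveOn.ciInf (convex_Ici 0)
    (fun i => ((dotProductBilin ℝ ℝ).flip (c i)).concaveOn (convex_Ici 0))
    fun _ => bddBelow_range_dotProduct c hc

end DotProduct

theorem lambda2_eq_iInf {V : Type*} [Fintype V] (L : Matrix V V ℝ) :
    lambda2 L =
      ⨅ x : {x : V → ℝ // (∑ i, x i ^ 2) = 1 ∧ (∑ i, x i) = 0}, x.1 ⬝ᵥ L *ᵥ x.1 := by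
  refine congrArg sInf (Set.ext fun r => ?_)
  simp [eq_comm, and_assoc]

theorem dotProduct_mulVec_lapOfWeights {n E : ℕ} (a : Fin E → Fin n → ℝ) (w : Fin E → ℝ)
    (x : Fin n → ℝ) : x ⬝ᵥ lapOfWeights a w *ᵥ x = w ⬝ᵥ fun l => (a l ⬝ᵥ x) ^ 2 := by
  simp only [lapOfWeights, sum_mulVec, smul_mulVec, vecMulVec_mulVec, dotProduct_sum,
    op_smul_eq_smul, dotProduct_smul, smul_eq_mul]
  simp only [dotProduct_comm x, ← sq]
  rfl

theorem lambda2_monotone_concave_general {n E : ℕ}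
    (a : Fin E → Fin n → ℝ) :
    (∀ w w' : Fin E → ℝ, (∀ l, 0 ≤ w l) → (∀ l, w l ≤ w' l) →
      lambda2 (lapOfWeights a w) ≤ lambda2 (lapOfWeights a w')) ∧
    ConcaveOn ℝ {w : Fin E → ℝ | ∀ l, 0 ≤ w l}
      (fun w => lambda2 (lapOfWeights a w)) := by
  let c : {x : Fin n → ℝ // (∑ i, x i ^ 2) = 1 ∧ (∑ i, x i) = 0} → Fin E → ℝ :=
    fun x l => (a l ⬝ᵥ x.1) ^ 2
  have hc : ∀ x, 0 ≤ c x := fun x l => sq_nonneg _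
  have hlam : ∀ w, lambda2 (lapOfWeights a w) = ⨅ x, w ⬝ᵥ c x := fun w => by
    simp only [lambda2_eq_iInf, dotProduct_mulVec_lapOfWeights, c]
  simp only [hlam]
  exact ⟨fun w w' hw hww' =>
      monotoneOn_iInf_dotProduct c hc hw (fun l => (hw l).trans (hww' l)) hww',
    concaveOn_iInf_dotProduct c hc⟩

/-- The algebraic connectivity `λ₂(L(w))` is a monotonically nondecreasing and
concave function of the edge-weight vector `w` on the nonnegative orthant. -/
theorem lambda2_monotone_concave {n E : ℕ}
    (a : Fin E → Fin n → ℝ) (ha : ∀ l, IsIncidenceVector (a l)) :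
    (∀ w w' : Fin E → ℝ, (∀ l, 0 ≤ w l) → (∀ l, w l ≤ w' l) →
      lambda2 (lapOfWeights a w) ≤ lambda2 (lapOfWeights a w')) ∧
    ConcaveOn ℝ {w : Fin E → ℝ | ∀ l, 0 ≤ w l}
      (fun w => lambda2 (lapOfWeights a w)) :=
  lambda2_monotone_concave_general a
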